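/- arXiv:1603.09060 — 2 statements merged into one kernel-verified Lean document; each statement's English description precedes it below -/
import Mathlib

section
/- Classical Stein's lemma: if X ~ N(μ, σ²) and c : ℝ → ℝ is differentiable with E[|c'(X)|] < ∞ and E[|(X−μ)c(X)|] < ∞, then E[(X − μ)·c(X)] = σ²·E[c'(X)]. -/
/-!
Writing `φ` for the density of `N(μ, v)`, one has `φ' x = -((x - μ) / v) φ x`, so integrating
`c φ'` by parts over `ℝ` gives `∫ (x - μ) c φ = v ∫ c' φ`. The boundary terms vanish because
`c φ` is integrable, which follows from the integrability of `(x - μ) c(x) φ` and the continuity of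
`c` near `μ`.
-/

open MeasureTheory ProbabilityTheory NNReal

lemma integrable_gaussianReal_iff {E : Type*} [NormedAddCommGroup E] [NormedSpace ℝ E]
    {μ : ℝ} {v : ℝ≥0} (hv : v ≠ 0) {f : ℝ → E} :
    Integrable f (gaussianReal μ v) ↔ Integrable (fun x => gaussianPDFReal μ v x • f x) := by
  rw [gaussianReal_of_var_ne_zero _ hv, integrable_withDensity_iff_integrable_smul'
    (measurable_gaussianPDF μ v) (ae_of_all _ fun _ => gaussianPDF_lt_top)]
  simp only [toReal_gaussianPDF]

lemma hasDerivAt_gaussianPDFReal (μ : ℝ) (v : ℝ≥0) (x : ℝ) :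
    HasDerivAt (gaussianPDFReal μ v) (-((x - μ) / v) * gaussianPDFReal μ v x) x := by
  have hexponent : HasDerivAt (fun y => -(y - μ) ^ 2 / (2 * v)) (-((x - μ) / v)) x :=
    ((((hasDerivAt_id x).sub_const μ).fun_pow 2).neg.div_const (2 * (v : ℝ))).congr_deriv
      (by field_simp; simp)
  exact (hexponent.exp.const_mul (√(2 * Real.pi * v))⁻¹).congr_deriv
    (by rw [gaussianPDFReal]; ring)

-- `c` is bounded near `a`, and dominated by `|(x - a) * c x|` away from `a`.
lemma MeasureTheory.Integrable.of_integrable_sub_mul {ν : Measure ℝ} [IsFiniteMeasure ν] {a : ℝ}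
    {c : ℝ → ℝ} (hc : Continuous c) (h : Integrable (fun x => (x - a) * c x) ν) :
    Integrable c ν := by
  obtain ⟨M, hM⟩ := (isCompact_closedBall a 1).exists_bound_of_continuousOn hc.continuousOn
  refine ((integrable_const M).add h.norm).mono' hc.aestronglyMeasurable (ae_of_all _ fun x => ?_)
  have hM₀ : 0 ≤ M := (norm_nonneg _).trans (hM a (Metric.mem_closedBall_self zero_le_one))
  rw [Pi.add_apply, norm_mul, Real.norm_eq_abs (x - a)]
  rcases le_or_gt (dist x a) 1 with hx | hx
  · nlinarith [hM x (Metric.mem_closedBall.2 hx), abs_nonneg (x - a), norm_nonneg (c x)]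
  · have hx : 1 ≤ |x - a| := (Real.dist_eq x a ▸ hx).le
    nlinarith [norm_nonneg (c x)]

lemma integral_sub_mul_gaussianReal {μ : ℝ} {v : ℝ≥0} (hv : v ≠ 0) {c : ℝ → ℝ}
    (hc : Differentiable ℝ c) (hc' : Integrable (deriv c) (gaussianReal μ v))
    (hxc : Integrable (fun x => (x - μ) * c x) (gaussianReal μ v)) :
    ∫ x, (x - μ) * c x ∂(gaussianReal μ v) = v * ∫ x, deriv c x ∂(gaussianReal μ v) := by
  set φ := gaussianPDFReal μ v
  have hcφ : Integrable (fun x => φ x * c x) :=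
    (integrable_gaussianReal_iff hv).1 (hxc.of_integrable_sub_mul hc.continuous)
  have hc'φ : Integrable (fun x => φ x * deriv c x) := (integrable_gaussianReal_iff hv).1 hc'
  have hφ'c : Integrable (fun x => -((x - μ) / v) * φ x * c x) :=
    (((integrable_gaussianReal_iff hv).1 hxc).const_mul (-(v : ℝ)⁻¹)).congr
      (ae_of_all _ fun x => by ring)
  have hparts : ∫ x, φ x * deriv c x = -∫ x, -((x - μ) / v) * φ x * c x :=
    integral_mul_deriv_eq_deriv_mul_of_integrable (fun x _ => hasDerivAt_gaussianPDFReal μ v x)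
      (fun x _ => (hc x).hasDerivAt) hc'φ hφ'c hcφ
  have hv' : (v : ℝ) ≠ 0 := NNReal.coe_ne_zero.2 hv
  simp only [integral_gaussianReal_eq_integral_smul hv, smul_eq_mul]
  rw [hparts, ← integral_neg, ← integral_const_mul]
  congr 1 with x
  field_simp
  ring

theorem classical_stein_lemma (μ : ℝ) (v : ℝ≥0) (hv : v ≠ 0) (c : ℝ → ℝ)
    (hc : Differentiable ℝ c)
    (h1 : Integrable (fun x => |deriv c x|) (gaussianReal μ v))
    (h2 : Integrable (fun x => |(x - μ) * c x|) (gaussianReal μ v)) :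
    ∫ x, (x - μ) * c x ∂(gaussianReal μ v)
      = (v : ℝ) * ∫ x, deriv c x ∂(gaussianReal μ v) := by
  have hxc : Continuous fun x => (x - μ) * c x :=
    (continuous_id.sub continuous_const).mul hc.continuous
  exact integral_sub_mul_gaussianReal hv hc
    ((integrable_norm_iff (measurable_deriv c).aestronglyMeasurable).1 h1)
    ((integrable_norm_iff hxc.aestronglyMeasurable).1 h2)
end

section
/- Bivariate Gaussian Stein lemma: if (X,Y) is jointly Gaussian and c : ℝ → ℝ is continuously differentiable with E[|c'(X)|] < ∞, then Cov[c(X), Y] = E[c'(X)]·Cov[X, Y]. -/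
open MeasureTheory

/-- The density of a bivariate normal distribution with means `μX, μY`,
standard deviations `σX, σY` and correlation `ρ`. -/
noncomputable def biGaussianPDF (μX μY σX σY ρ : ℝ) (x y : ℝ) : ℝ :=
  (2 * Real.pi * σX * σY * Real.sqrt (1 - ρ ^ 2))⁻¹ *
    Real.exp (-(1 / (2 * (1 - ρ ^ 2))) *
      ((x - μX) ^ 2 / σX ^ 2 - 2 * ρ * (x - μX) * (y - μY) / (σX * σY)
        + (y - μY) ^ 2 / σY ^ 2))

/-!
The bivariate normal density factors as the `𝓝(μX, σX²)` density of `X` times the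
`𝓝(μY + ρ σY / σX (x - μX), σY² (1 - ρ²))` density of `Y` given `X = x`. Integrating out `y`
replaces `Y - μY` by the regression term `ρ σY / σX (X - μX)`, and what is left is the
one-dimensional Stein identity `E[u(X) (X - μX)] = σX² E[u'(X)]`: Gaussian integration by parts,
since the density `φ` of `X` satisfies `σX² φ' = -(x - μX) φ`.
-/

open scoped NNReal ENNReal

namespace ProbabilityTheory

open Real

section Stein

variable {m : ℝ} {v : ℝ≥0}

lemma hasDerivAt_gaussianPDFReal (m : ℝ) (v : ℝ≥0) (x : ℝ) :
    HasDerivAt (gaussianPDFReal m v) (-((x - m) / v) * gaussianPDFReal m v x) x := by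
  have hexponent : HasDerivAt (fun x => -(x - m) ^ 2 / (2 * v)) (-((x - m) / v)) x :=
    ((((hasDerivAt_id' x).sub_const m).pow 2).neg.div_const (2 * (v : ℝ))).congr_deriv (by ring)
  rw [gaussianPDFReal_def]
  exact (hexponent.exp.const_mul (√(2 * π * v))⁻¹).congr_deriv (by ring)

lemma integrable_gaussianReal_iff (hv : v ≠ 0) {f : ℝ → ℝ} :
    Integrable f (gaussianReal m v) ↔ Integrable (fun x => f x * gaussianPDFReal m v x) := by
  rw [gaussianReal_of_var_ne_zero _ hv, gaussianPDF_def,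
    integrable_withDensity_iff_integrable_smul' (by fun_prop)
      (ae_of_all _ fun _ => ENNReal.ofReal_lt_top)]
  simp only [ENNReal.toReal_ofReal (gaussianPDFReal_nonneg _ _ _), smul_eq_mul, mul_comm]

lemma integral_gaussianReal_eq_integral_mul (hv : v ≠ 0) (f : ℝ → ℝ) :
    ∫ x, f x ∂gaussianReal m v = ∫ x, f x * gaussianPDFReal m v x := by
  simp only [integral_gaussianReal_eq_integral_smul hv, smul_eq_mul, mul_comm]

theorem integral_mul_sub_gaussianReal (hv : v ≠ 0) {u u' : ℝ → ℝ}
    (hu : ∀ x, HasDerivAt u (u' x) x) (hu_int : Integrable u (gaussianReal m v))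
    (hu'_int : Integrable u' (gaussianReal m v))
    (hux_int : Integrable (fun x => u x * (x - m)) (gaussianReal m v)) :
    ∫ x, u x * (x - m) ∂gaussianReal m v = v * ∫ x, u' x ∂gaussianReal m v := by
  rw [integrable_gaussianReal_iff hv] at hu_int hu'_int hux_int
  simp only [integral_gaussianReal_eq_integral_mul hv]
  set φ := gaussianPDFReal m v
  have hscore : ∀ x, u x * (-((x - m) / v) * φ x) = -(v : ℝ)⁻¹ * (u x * (x - m) * φ x) :=
    fun x => by ring
  have hibp : ∫ x, u x * (-((x - m) / v) * φ x) = -∫ x, u' x * φ x :=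
    integral_mul_deriv_eq_deriv_mul_of_integrable (fun x _ => hu x)
      (fun x _ => hasDerivAt_gaussianPDFReal m v x)
      ((hux_int.const_mul _).congr (ae_of_all _ fun x => (hscore x).symm)) hu'_int hu_int
  simp only [hscore, integral_const_mul] at hibp
  field_simp at hibp
  linear_combination -hibp

end Stein

lemma integral_const_mul_sub_gaussianReal (μ : ℝ) (v : ℝ≥0) (a b : ℝ) :
    ∫ y, a * (y - b) ∂gaussianReal μ v = a * (μ - b) := by
  rw [integral_const_mul, integral_sub (f := fun y => y)
    ((memLp_id_gaussianReal 1).integrable le_rfl) (integrable_const b)]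
  simp

noncomputable def gaussianKernel (m : ℝ → ℝ) (hm : Measurable m) (v : ℝ≥0) : Kernel ℝ ℝ where
  toFun x := gaussianReal (m x) v
  measurable' := measurable_gaussianReal.comp (hm.prodMk measurable_const)

section GaussianKernel

variable {m : ℝ → ℝ} {hm : Measurable m} {v : ℝ≥0}

@[simp]
lemma gaussianKernel_apply (x : ℝ) : gaussianKernel m hm v x = gaussianReal (m x) v := rfl

instance : IsMarkovKernel (gaussianKernel m hm v) :=
  ⟨fun x => by rw [gaussianKernel_apply]; infer_instance⟩

lemma integral_compProd_gaussianKernel (μ : Measure ℝ) [SFinite μ] (g : ℝ → ℝ) (b : ℝ)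
    (h : Integrable (fun p => g p.1 * (p.2 - b)) (μ ⊗ₘ gaussianKernel m hm v)) :
    ∫ p, g p.1 * (p.2 - b) ∂(μ ⊗ₘ gaussianKernel m hm v) = ∫ x, g x * (m x - b) ∂μ := by
  simp [Measure.integral_compProd h, integral_const_mul_sub_gaussianReal]

lemma _root_.MeasureTheory.Integrable.of_compProd_gaussianKernel {μ : Measure ℝ} [SFinite μ]
    {g : ℝ → ℝ} {b : ℝ}
    (h : Integrable (fun p => g p.1 * (p.2 - b)) (μ ⊗ₘ gaussianKernel m hm v)) :
    Integrable (fun x => g x * (m x - b)) μ := by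
  simpa [integral_const_mul_sub_gaussianReal] using h.integral_compProd

end GaussianKernel

end ProbabilityTheory

section BivariateGaussian

open ProbabilityTheory Real

variable {μX μY σX σY ρ : ℝ}

lemma biGaussianPDF_eq_mul (hσX : 0 < σX) (hσY : 0 < σY) (hρ : ρ ^ 2 < 1) (x y : ℝ) :
    biGaussianPDF μX μY σX σY ρ x y = gaussianPDFReal μX (σX ^ 2).toNNReal x *
      gaussianPDFReal (μY + ρ * σY / σX * (x - μX)) (σY ^ 2 * (1 - ρ ^ 2)).toNNReal y := by
  have hρ' : 0 < 1 - ρ ^ 2 := by linarith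
  have hsqrt : √(2 * π * σX ^ 2) * √(2 * π * (σY ^ 2 * (1 - ρ ^ 2)))
      = 2 * π * σX * σY * √(1 - ρ ^ 2) := by
    rw [← sqrt_mul (by positivity), show 2 * π * σX ^ 2 * (2 * π * (σY ^ 2 * (1 - ρ ^ 2)))
      = (2 * π * σX * σY) ^ 2 * (1 - ρ ^ 2) by ring, sqrt_mul (by positivity),
      sqrt_sq (by positivity)]
  have hexponent : -(1 / (2 * (1 - ρ ^ 2))) *
      ((x - μX) ^ 2 / σX ^ 2 - 2 * ρ * (x - μX) * (y - μY) / (σX * σY) + (y - μY) ^ 2 / σY ^ 2)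
      = -(x - μX) ^ 2 / (2 * σX ^ 2)
        + -(y - (μY + ρ * σY / σX * (x - μX))) ^ 2 / (2 * (σY ^ 2 * (1 - ρ ^ 2))) := by
    field_simp
    ring
  rw [biGaussianPDF, gaussianPDFReal_def, gaussianPDFReal_def, coe_toNNReal _ (by positivity),
    coe_toNNReal _ (by positivity), mul_mul_mul_comm, ← mul_inv, hsqrt, ← exp_add, hexponent]

theorem withDensity_biGaussianPDF (hσX : 0 < σX) (hσY : 0 < σY) (hρ : ρ ^ 2 < 1) :
    volume.withDensity (fun p => ENNReal.ofReal (biGaussianPDF μX μY σX σY ρ p.1 p.2))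
      = gaussianReal μX (σX ^ 2).toNNReal ⊗ₘ gaussianKernel
          (fun x => μY + ρ * σY / σX * (x - μX)) (by fun_prop) (σY ^ 2 * (1 - ρ ^ 2)).toNNReal := by
  have hρ' : 0 < 1 - ρ ^ 2 := by linarith
  have hvX : (σX ^ 2).toNNReal ≠ 0 := (toNNReal_pos.mpr (by positivity)).ne'
  have hvY : (σY ^ 2 * (1 - ρ ^ 2)).toNNReal ≠ 0 := (toNNReal_pos.mpr (by positivity)).ne'
  have hdensity : (fun p : ℝ × ℝ => ENNReal.ofReal (biGaussianPDF μX μY σX σY ρ p.1 p.2))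
      = fun p => gaussianPDF μX (σX ^ 2).toNNReal p.1 *
          gaussianPDF (μY + ρ * σY / σX * (p.1 - μX)) (σY ^ 2 * (1 - ρ ^ 2)).toNNReal p.2 := by
    ext p
    rw [biGaussianPDF_eq_mul hσX hσY hρ, ENNReal.ofReal_mul (gaussianPDFReal_nonneg _ _ _)]
    rfl
  ext s hs
  rw [hdensity, withDensity_apply _ hs, Measure.compProd_apply hs, Measure.volume_eq_prod,
    ← lintegral_indicator hs, lintegral_prod _ (by fun_prop), gaussianReal_of_var_ne_zero _ hvX,
    lintegral_withDensity_eq_lintegral_mul _ (measurable_gaussianPDF _ _)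
      (Kernel.measurable_kernel_prodMk_left hs)]
  refine lintegral_congr fun x => ?_
  rw [Pi.mul_apply, gaussianKernel_apply, gaussianReal_of_var_ne_zero _ hvY,
    withDensity_apply _ (measurable_prodMk_left hs),
    ← lintegral_indicator (measurable_prodMk_left hs),
    ← lintegral_const_mul _ ((measurable_gaussianPDF _ _).indicator (measurable_prodMk_left hs))]
  refine lintegral_congr fun y => ?_
  by_cases hxy : (x, y) ∈ s <;> simp [hxy]

end BivariateGaussian

open ProbabilityTheory (gaussianReal gaussianKernel integral_compProd_gaussianKernel
  integral_mul_sub_gaussianReal)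

theorem bivariate_gaussian_stein_lemma_general
    {Ω : Type*} [MeasurableSpace Ω] (ℙ : Measure Ω)
    (X Y : Ω → ℝ) (hX : Measurable X) (hY : Measurable Y)
    (μX μY σX σY ρ : ℝ) (hσX : 0 < σX) (hσY : 0 < σY) (hρ : ρ ^ 2 < 1)
    (hjoint : Measure.map (fun ω => (X ω, Y ω)) ℙ
      = volume.withDensity (fun p => ENNReal.ofReal (biGaussianPDF μX μY σX σY ρ p.1 p.2)))
    (c : ℝ → ℝ) (hc : ContDiff ℝ 1 c)
    (hintc : Integrable (fun ω => c (X ω)) ℙ)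
    (hintc' : Integrable (fun ω => |deriv c (X ω)|) ℙ)
    (hintcov : Integrable (fun ω => (c (X ω) - ∫ ω', c (X ω') ∂ℙ) * (Y ω - μY)) ℙ) :
    ∫ ω, (c (X ω) - ∫ ω', c (X ω') ∂ℙ) * (Y ω - μY) ∂ℙ
      = (∫ ω, deriv c (X ω) ∂ℙ) * (ρ * σX * σY) := by
  set K := ∫ ω', c (X ω') ∂ℙ
  set β := ρ * σY / σX
  set vX := (σX ^ 2).toNNReal
  set law := (gaussianReal μX vX).compProd
    (gaussianKernel (fun x => μY + β * (x - μX)) (by fun_prop) (σY ^ 2 * (1 - ρ ^ 2)).toNNReal)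
  have hvX : vX ≠ 0 := (Real.toNNReal_pos.mpr (by positivity)).ne'
  have hXY : ℙ.map (fun ω => (X ω, Y ω)) = law :=
    hjoint.trans (withDensity_biGaussianPDF hσX hσY hρ)
  have hX_law : ℙ.map X = gaussianReal μX vX := by
    rw [← Measure.fst_map_prodMk hY, hXY, Measure.fst_compProd]
  have hc'_cont : Continuous (deriv c) := hc.continuous_deriv le_rfl
  have hcov_int : Integrable (fun p : ℝ × ℝ => (c p.1 - K) * (p.2 - μY)) law := by
    rwa [← hXY, integrable_map_measure (by fun_prop) (hX.prodMk hY).aemeasurable]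
  have hc_int : Integrable c (gaussianReal μX vX) := by
    rwa [← hX_law, integrable_map_measure hc.continuous.aestronglyMeasurable hX.aemeasurable]
  have hc'_int : Integrable (deriv c) (gaussianReal μX vX) := by
    rw [← hX_law, integrable_map_measure hc'_cont.aestronglyMeasurable hX.aemeasurable]
    exact (integrable_norm_iff (hc'_cont.comp_aestronglyMeasurable hX.aestronglyMeasurable)).mp
      hintc'
  have hregression : ∀ x, (c x - K) * (μY + β * (x - μX) - μY) = β * (c x - K) * (x - μX) :=
    fun x => by ring
  have hu : ∀ x, HasDerivAt (fun x => β * (c x - K)) (β * deriv c x) x := fun x =>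
    ((hc.differentiable one_ne_zero x).hasDerivAt.sub_const K).const_mul β
  calc ∫ ω, (c (X ω) - K) * (Y ω - μY) ∂ℙ
      = ∫ p, (c p.1 - K) * (p.2 - μY) ∂law := by
        rw [← hXY, integral_map (hX.prodMk hY).aemeasurable (by fun_prop)]
    _ = ∫ x, β * (c x - K) * (x - μX) ∂gaussianReal μX vX :=
        (integral_compProd_gaussianKernel _ (fun x => c x - K) μY hcov_int).trans
          (integral_congr_ae (ae_of_all _ hregression))
    _ = vX * ∫ x, β * deriv c x ∂gaussianReal μX vX :=
        integral_mul_sub_gaussianReal hvX hu ((hc_int.sub (integrable_const K)).const_mul β)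
          (hc'_int.const_mul β)
          (hcov_int.of_compProd_gaussianKernel.congr (ae_of_all _ hregression))
    _ = (∫ ω, deriv c (X ω) ∂ℙ) * (ρ * σX * σY) := by
        rw [integral_const_mul, ← hX_law,
          integral_map hX.aemeasurable hc'_cont.aestronglyMeasurable,
          Real.coe_toNNReal _ (sq_nonneg σX)]
        simp only [β]
        field_simp

theorem bivariate_gaussian_stein_lemma
    {Ω : Type*} [MeasurableSpace Ω] (ℙ : Measure Ω) [IsProbabilityMeasure ℙ]
    (X Y : Ω → ℝ) (hX : Measurable X) (hY : Measurable Y)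
    (μX μY σX σY ρ : ℝ) (hσX : 0 < σX) (hσY : 0 < σY) (hρ : ρ ^ 2 < 1)
    (hjoint : Measure.map (fun ω => (X ω, Y ω)) ℙ
      = volume.withDensity (fun p => ENNReal.ofReal (biGaussianPDF μX μY σX σY ρ p.1 p.2)))
    (c : ℝ → ℝ) (hc : ContDiff ℝ 1 c)
    (hintc : Integrable (fun ω => c (X ω)) ℙ)
    (hintc' : Integrable (fun ω => |deriv c (X ω)|) ℙ)
    (hintcov : Integrable (fun ω => (c (X ω) - ∫ ω', c (X ω') ∂ℙ) * (Y ω - μY)) ℙ) :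
    ∫ ω, (c (X ω) - ∫ ω', c (X ω') ∂ℙ) * (Y ω - μY) ∂ℙ
      = (∫ ω, deriv c (X ω) ∂ℙ) * (ρ * σX * σY) :=
  bivariate_gaussian_stein_lemma_general ℙ X Y hX hY μX μY σX σY ρ hσX hσY hρ hjoint c hc hintc
    hintc' hintcov
end
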